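/- Two mp-maximal subgraphs of a simple graph G are not vertex-disjoint: if G' and G'' are subgraphs of G each on q = perm_mp(A_G) vertices with perm_mp(A_{G'}) = perm_mp(A_{G''}) = q > 0, then their vertex sets intersect. -/

import Mathlib

/-- The max-plus permanent of a simple graph: the maximum over permutations `π`
of the vertex type of the number of vertices `v` with `(v, π v)` an edge. -/
noncomputable def mpPerm {V : Type*} (G : SimpleGraph V) : ℕ :=
  sSup {n : ℕ | ∃ π : Equiv.Perm V, n = Nat.card {v // G.Adj v (π v)}}

/-!
A graph `H` on `q` vertices with `mpPerm H = q` has a permutation sending every vertex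
to a neighbour. If two such subgraphs of `G` were vertex-disjoint, the two permutations would
combine into one permutation of the vertices of `G` that realises `2q` edges, so `2q ≤ mpPerm G = q`,
contradicting `q > 0`.
-/

namespace SimpleGraph

variable {V : Type*} [Finite V]

lemma bddAbove_card_adj_perm (G : SimpleGraph V) :
    BddAbove {n : ℕ | ∃ π : Equiv.Perm V, n = Nat.card {v // G.Adj v (π v)}} :=
  ⟨Nat.card V, by rintro _ ⟨π, rfl⟩; exact Finite.card_subtype_le _⟩

lemma card_adj_perm_le_mpPerm (G : SimpleGraph V) (π : Equiv.Perm V) :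
    Nat.card {v // G.Adj v (π v)} ≤ mpPerm G :=
  le_csSup G.bddAbove_card_adj_perm ⟨π, rfl⟩

lemma ncard_le_mpPerm_of_forall_adj (G : SimpleGraph V) (π : Equiv.Perm V) {s : Set V}
    (hs : ∀ v ∈ s, G.Adj v (π v)) : s.ncard ≤ mpPerm G :=
  calc s.ncard ≤ {v | G.Adj v (π v)}.ncard := Set.ncard_le_ncard hs
    _ = Nat.card {v // G.Adj v (π v)} := (Nat.card_coe_set_eq _).symm
    _ ≤ mpPerm G := G.card_adj_perm_le_mpPerm π

lemma exists_perm_forall_adj_of_mpPerm_eq_card (G : SimpleGraph V)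
    (h : mpPerm G = Nat.card V) : ∃ π : Equiv.Perm V, ∀ v, G.Adj v (π v) := by
  obtain ⟨π, hπ⟩ : mpPerm G ∈ {n : ℕ | ∃ π : Equiv.Perm V, n = Nat.card {v // G.Adj v (π v)}} :=
    Nat.sSup_mem ⟨_, 1, rfl⟩ G.bddAbove_card_adj_perm
  refine ⟨π, fun v => by_contra fun hv => ?_⟩
  exact (Finite.card_subtype_lt (p := fun v => G.Adj v (π v)) hv).ne (hπ.symm.trans h)

namespace Subgraph

lemma exists_perm_forall_adj_of_mpPerm_coe_eq_card {G : SimpleGraph V} (H : G.Subgraph)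
    (h : mpPerm H.coe = Nat.card H.verts) :
    ∃ π : Equiv.Perm V, (∀ v ∈ H.verts, H.Adj v (π v)) ∧ ∀ v ∉ H.verts, π v = v := by
  classical
  obtain ⟨π, hπ⟩ := H.coe.exists_perm_forall_adj_of_mpPerm_eq_card h
  refine ⟨Equiv.Perm.ofSubtype π, fun v hv => ?_, fun v hv => ?_⟩
  · rw [Equiv.Perm.ofSubtype_apply_of_mem π hv]
    exact hπ ⟨v, hv⟩
  · exact Equiv.Perm.ofSubtype_apply_of_not_mem π hv

lemma card_verts_add_card_verts_le_mpPerm {G : SimpleGraph V} {H₁ H₂ : G.Subgraph}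
    (hdisj : Disjoint H₁.verts H₂.verts) (h₁ : mpPerm H₁.coe = Nat.card H₁.verts)
    (h₂ : mpPerm H₂.coe = Nat.card H₂.verts) :
    Nat.card H₁.verts + Nat.card H₂.verts ≤ mpPerm G := by
  obtain ⟨π₁, hadj₁, hfix₁⟩ := H₁.exists_perm_forall_adj_of_mpPerm_coe_eq_card h₁
  obtain ⟨π₂, hadj₂, hfix₂⟩ := H₂.exists_perm_forall_adj_of_mpPerm_coe_eq_card h₂
  have hadj : ∀ v ∈ H₁.verts ∪ H₂.verts, G.Adj v ((π₁ * π₂) v) := by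
    rintro v (hv | hv)
    · rw [Equiv.Perm.mul_apply, hfix₂ v (hdisj.notMem_of_mem_left hv)]
      exact (hadj₁ v hv).adj_sub
    · have hπv : π₂ v ∈ H₂.verts := (hadj₂ v hv).snd_mem
      rw [Equiv.Perm.mul_apply, hfix₁ _ (hdisj.notMem_of_mem_right hπv)]
      exact (hadj₂ v hv).adj_sub
  simpa only [Nat.card_coe_set_eq, Set.ncard_union_eq hdisj] using
    G.ncard_le_mpPerm_of_forall_adj (π₁ * π₂) hadj

end Subgraph

end SimpleGraph

theorem mpMaximal_subgraphs_not_disjoint (N : ℕ) (G : SimpleGraph (Fin N))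
    (G' G'' : G.Subgraph) (q : ℕ) (hq : mpPerm G = q) (hq0 : 0 < q)
    (hv' : Nat.card G'.verts = q) (hv'' : Nat.card G''.verts = q)
    (hp' : mpPerm G'.coe = q) (hp'' : mpPerm G''.coe = q) :
    (G'.verts ∩ G''.verts).Nonempty := by
  rw [← Set.not_disjoint_iff_nonempty_inter]
  intro hdisj
  have h2q := SimpleGraph.Subgraph.card_verts_add_card_verts_le_mpPerm hdisj
    (hp'.trans hv'.symm) (hp''.trans hv''.symm)
  omega
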